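/- Let y ∈ Y be an attribute, let j_1, …, j_n be non-negative integers, let z be a non-negative integer, and let Σ = {{y^0} ⇒ {y^{j_i}} | i = 1, …, n}. Then Σ ⊢ {y^0} ⇒ {y^z} if and only if there exist non-negative integers c_1, …, c_n such that c_1·j_1 + ⋯ + c_n·j_n = z. -/

import Mathlib

/-!
The time points `z` with `Σ ⊢ {y^0} ⇒ {y^z}` form exactly the additive submonoid of `ℤ`
generated by `j_1, …, j_n`. It contains `0` by (Ax), the generators by hypothesis, and it is
closed under addition: shift `{y^0} ⇒ {y^b}` by `a` and cut it against `{y^0} ⇒ {y^a}`.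
Conversely, `{y^t | t ∈ ⟨j_1, …, j_n⟩}` is a model of `Σ` containing `y^0`, so by soundness
it contains `y^z`.
-/

namespace TAI

variable {Y : Type*}

/-- Time shift of a set of time-annotated attributes: `M + j`. -/
def shiftS (M : Set (Y × ℤ)) (j : ℤ) : Set (Y × ℤ) :=
  (fun p : Y × ℤ => (p.1, p.2 + j)) '' M

/-- Time shift of a finite set of time-annotated attributes: `A + j`. -/
def shiftF [DecidableEq Y] (A : Finset (Y × ℤ)) (j : ℤ) : Finset (Y × ℤ) :=
  A.image (fun p => (p.1, p.2 + j))

/-- An attribute implication over `Y` annotated by time points: a pair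
`(A, B)` of finite subsets of `T_Y = Y × ℤ`, read as `A ⇒ B`. -/
abbrev Fml (Y : Type*) := Finset (Y × ℤ) × Finset (Y × ℤ)

/-- `A ⇒ B` is true in `M ⊆ T_Y`: for every `i ∈ ℤ`, `A + i ⊆ M` implies `B + i ⊆ M`. -/
def Holds [DecidableEq Y] (M : Set (Y × ℤ)) (φ : Fml Y) : Prop :=
  ∀ i : ℤ, ↑(shiftF φ.1 i) ⊆ M → ↑(shiftF φ.2 i) ⊆ M

/-- The models of a theory `T`. -/
def Mods [DecidableEq Y] (T : Set (Fml Y)) : Set (Set (Y × ℤ)) :=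
  {M | ∀ φ ∈ T, Holds M φ}

/-- Semantic entailment: `T ⊨ φ`. -/
def Entails [DecidableEq Y] (T : Set (Fml Y)) (φ : Fml Y) : Prop :=
  ∀ M ∈ Mods T, Holds M φ

/-- Semantic closure `[M]_Σ`. -/
def semClos [DecidableEq Y] (T : Set (Fml Y)) (M : Set (Y × ℤ)) : Set (Y × ℤ) :=
  ⋂₀ {N | N ∈ Mods T ∧ M ⊆ N}

/-- Classical (time-point-free) truth: `M ⊨_PL A ⇒ B` iff `A ⊆ M` implies `B ⊆ M`. -/
def HoldsPL (M : Set (Y × ℤ)) (φ : Fml Y) : Prop :=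
  ↑φ.1 ⊆ M → ↑φ.2 ⊆ M

/-- Classical models. -/
def ModsPL (T : Set (Fml Y)) : Set (Set (Y × ℤ)) :=
  {M | ∀ φ ∈ T, HoldsPL M φ}

/-- Classical semantic entailment `⊨_PL`. -/
def EntailsPL (T : Set (Fml Y)) (φ : Fml Y) : Prop :=
  ∀ M ∈ ModsPL T, HoldsPL M φ

/-- `Σ^PL = {A + i ⇒ B + i | A ⇒ B ∈ Σ, i ∈ ℤ}`. -/
def shiftAll [DecidableEq Y] (T : Set (Fml Y)) : Set (Fml Y) :=
  {ψ | ∃ φ ∈ T, ∃ i : ℤ, ψ = (shiftF φ.1 i, shiftF φ.2 i)}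

/-- One step of the syntactic closure construction. -/
def synStep [DecidableEq Y] (T : Set (Fml Y)) (M : Set (Y × ℤ)) : Set (Y × ℤ) :=
  M ∪ ⋃₀ {S | ∃ φ ∈ T, ∃ i : ℤ, ↑(shiftF φ.1 i) ⊆ M ∧ S = (↑(shiftF φ.2 i) : Set (Y × ℤ))}

/-- `M_Σ^n`. -/
def synIter [DecidableEq Y] (T : Set (Fml Y)) (M : Set (Y × ℤ)) : ℕ → Set (Y × ℤ)
  | 0 => M
  | n + 1 => synStep T (synIter T M n)

/-- The syntactic closure `M_Σ^ω`. -/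
def synClos [DecidableEq Y] (T : Set (Fml Y)) (M : Set (Y × ℤ)) : Set (Y × ℤ) :=
  ⋃ n : ℕ, synIter T M n

/-- Provability from `T` using the rules (Ax), (Cut) and (Shf). -/
inductive Prov [DecidableEq Y] (T : Set (Fml Y)) : Fml Y → Prop
  | hyp {φ : Fml Y} : φ ∈ T → Prov T φ
  | ax (A B : Finset (Y × ℤ)) : Prov T (A ∪ B, A)
  | cut {A B C D : Finset (Y × ℤ)} :
      Prov T (A, B) → Prov T (B ∪ C, D) → Prov T (A ∪ C, D)
  | shf {A B : Finset (Y × ℤ)} (i : ℤ) :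
      Prov T (A, B) → Prov T (shiftF A i, shiftF B i)

/-- Provability from `T` using only the rules (Ax) and (Cut) (no time shifts). -/
inductive ProvAC [DecidableEq Y] (T : Set (Fml Y)) : Fml Y → Prop
  | hyp {φ : Fml Y} : φ ∈ T → ProvAC T φ
  | ax (A B : Finset (Y × ℤ)) : ProvAC T (A ∪ B, A)
  | cut {A B C D : Finset (Y × ℤ)} :
      ProvAC T (A, B) → ProvAC T (B ∪ C, D) → ProvAC T (A ∪ C, D)

/-- Provability from `T` using the rules (Ax) and (Cut_i). -/
inductive ProvCuti [DecidableEq Y] (T : Set (Fml Y)) : Fml Y → Prop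
  | hyp {φ : Fml Y} : φ ∈ T → ProvCuti T φ
  | ax (A B : Finset (Y × ℤ)) : ProvCuti T (A ∪ B, A)
  | cuti {A B C D : Finset (Y × ℤ)} (i : ℤ) :
      ProvCuti T (A, shiftF B i) → ProvCuti T (B ∪ C, D) →
      ProvCuti T (A ∪ shiftF C i, shiftF D i)

/-- Provability from `T` using the rules (Ref) and (Sim_i). -/
inductive ProvRS [DecidableEq Y] (T : Set (Fml Y)) : Fml Y → Prop
  | hyp {φ : Fml Y} : φ ∈ T → ProvRS T φ
  | ref (A : Finset (Y × ℤ)) : ProvRS T (A, A)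
  | simi {A B C D : Finset (Y × ℤ)} (i : ℤ) :
      ProvRS T (A, shiftF B i) → ProvRS T (C, D) →
      ProvRS T (A ∪ shiftF (C \ B) i, shiftF D i)

/-- The closure operator induced by a closure system `S`. -/
def closOp (S : Set (Set (Y × ℤ))) (M : Set (Y × ℤ)) : Set (Y × ℤ) :=
  ⋂₀ {N | N ∈ S ∧ M ⊆ N}

/-- The least time point occurring in a finite set (`0` for the empty set). -/
def lo (A : Finset (Y × ℤ)) : ℤ :=
  (A.image Prod.snd).min.untopD 0

/-- The greatest time point occurring in a finite set (`0` for the empty set). -/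
def hi (A : Finset (Y × ℤ)) : ℤ :=
  (A.image Prod.snd).max.unbotD 0

/-- A formula `A ⇒ B` is predictive if `A ≠ ∅`, `B ≠ ∅`, and every time point in
`A` is less than or equal to every time point in `B`. -/
def Predictive (φ : Fml Y) : Prop :=
  φ.1.Nonempty ∧ φ.2.Nonempty ∧ ∀ p ∈ φ.1, ∀ q ∈ φ.2, p.2 ≤ q.2

section

variable [DecidableEq Y]

@[simp]
lemma shiftF_singleton (p : Y × ℤ) (i : ℤ) : shiftF {p} i = {(p.1, p.2 + i)} :=
  Finset.image_singleton _ _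

lemma shiftF_union (A B : Finset (Y × ℤ)) (i : ℤ) :
    shiftF (A ∪ B) i = shiftF A i ∪ shiftF B i :=
  Finset.image_union _ _

lemma shiftF_shiftF (A : Finset (Y × ℤ)) (a b : ℤ) :
    shiftF (shiftF A a) b = shiftF A (a + b) := by
  simp only [shiftF, Finset.image_image]
  exact Finset.image_congr fun p _ => by simp [add_assoc]

namespace Prov

variable {T : Set (Fml Y)}

lemma refl (A : Finset (Y × ℤ)) : Prov T (A, A) := by
  simpa using Prov.ax (T := T) A ∅

lemma trans {A B C : Finset (Y × ℤ)} (hAB : Prov T (A, B)) (hBC : Prov T (B, C)) :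
    Prov T (A, C) := by
  simpa using Prov.cut (C := ∅) hAB (by simpa using hBC)

lemma entails {φ : Fml Y} (h : Prov T φ) : Entails T φ := by
  induction h with
  | hyp hφ => exact fun M hM => hM _ hφ
  | ax A B =>
    intro M _ i hsub
    rw [shiftF_union, Finset.coe_union] at hsub
    exact Set.subset_union_left.trans hsub
  | cut _ _ ih₁ ih₂ =>
    intro M hM i hsub
    rw [shiftF_union, Finset.coe_union, Set.union_subset_iff] at hsub
    refine ih₂ M hM i ?_
    rw [shiftF_union, Finset.coe_union]
    exact Set.union_subset (ih₁ M hM i hsub.1) hsub.2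
  | shf j _ ih =>
    intro M hM i hsub
    rw [shiftF_shiftF] at hsub ⊢
    exact ih M hM (j + i) hsub

lemma singleton_add {y : Y} {a b : ℤ} (ha : Prov T ({(y, 0)}, {(y, a)}))
    (hb : Prov T ({(y, 0)}, {(y, b)})) : Prov T ({(y, 0)}, {(y, a + b)}) := by
  have hb' := Prov.shf a hb
  simp only [shiftF_singleton, zero_add] at hb'
  exact ha.trans (by rwa [add_comm])

end Prov

lemma holds_singleton_iff {M : Set (Y × ℤ)} {y : Y} {a b : ℤ} :
    Holds M ({(y, a)}, {(y, b)}) ↔ ∀ t, (y, a + t) ∈ M → (y, b + t) ∈ M := by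
  simp [Holds]

def singletonTheory {ι : Type*} (y : Y) (a : ι → ℤ) : Set (Fml Y) :=
  {φ | ∃ i, φ = ({(y, 0)}, {(y, a i)})}

lemma prov_singletonTheory_iff_mem_closure {ι : Type*} (y : Y) (a : ι → ℤ) (z : ℤ) :
    Prov (singletonTheory y a) ({(y, 0)}, {(y, z)}) ↔
      z ∈ AddSubmonoid.closure (Set.range a) := by
  constructor
  · intro h
    let M : Set (Y × ℤ) := {p | p.1 = y ∧ p.2 ∈ AddSubmonoid.closure (Set.range a)}
    have hM : M ∈ Mods (singletonTheory y a) := by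
      rintro _ ⟨i, rfl⟩
      refine holds_singleton_iff.2 fun t ⟨_, ht⟩ => ⟨rfl, ?_⟩
      exact add_mem (AddSubmonoid.subset_closure ⟨i, rfl⟩) (by simpa using ht)
    have := holds_singleton_iff.1 (h.entails M hM) 0 ⟨rfl, by simp⟩
    simpa using this.2
  · intro hz
    induction hz using AddSubmonoid.closure_induction with
    | mem _ h =>
      obtain ⟨i, rfl⟩ := h
      exact Prov.hyp ⟨i, rfl⟩
    | zero => exact Prov.refl _
    | add _ _ _ _ ha hb => exact ha.singleton_add hb

end

theorem unbounded_subset_sum_reduction_general [DecidableEq Y]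
    (y : Y) (n : ℕ) (j : Fin n → ℕ) (z : ℕ) :
    Prov {φ : Fml Y | ∃ i : Fin n, φ = ({(y, (0 : ℤ))}, {(y, (j i : ℤ))})}
        ({(y, (0 : ℤ))}, {(y, (z : ℤ))}) ↔
      ∃ c : Fin n → ℕ, ∑ i, c i * j i = z := by
  rw [← singletonTheory, prov_singletonTheory_iff_mem_closure,
    AddSubmonoid.mem_closure_range_iff_of_fintype]
  refine exists_congr fun c => ?_
  rw [eq_comm, ← Nat.cast_inj (R := ℤ)]
  push_cast
  simp

/-- for `Σ = {{y^0} ⇒ {y^{j_i}} | i = 1, …, n}`,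
`Σ ⊢ {y^0} ⇒ {y^z}` iff `z = c_1·j_1 + ⋯ + c_n·j_n` for some non-negative
integers `c_1, …, c_n`. -/
theorem unbounded_subset_sum_reduction [DecidableEq Y] [Fintype Y] [Nonempty Y]
    (y : Y) (n : ℕ) (j : Fin n → ℕ) (z : ℕ) :
    Prov {φ : Fml Y | ∃ i : Fin n, φ = ({(y, (0 : ℤ))}, {(y, (j i : ℤ))})}
        ({(y, (0 : ℤ))}, {(y, (z : ℤ))}) ↔
      ∃ c : Fin n → ℕ, ∑ i, c i * j i = z :=
  unbounded_subset_sum_reduction_general y n j z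

end TAI
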